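/- Let d ≥ 2, D_1 > 0, ζ = 2, and define M(r) = D_1 [ I + (2/(d-1)) (I - r̂⊗r̂) ] |r|². Then for any s ∈ (0, d/2), the function G(r) = |r|^{2s - d} satisfies the pointwise equation M(r) : ∇⊗∇ G(r) = -λ G(r) for all nonzero r ∈ ℝ^d, with λ = 2 D_1 s (d - 2s). -/

import Mathlib

open Real

lemma sq_rpow' (a b : ℝ) (ha : 0 ≤ a) : (a ^ 2) ^ b = a ^ (2 * b) := by
  rw [← Real.rpow_natCast a 2, ← Real.rpow_mul ha]; norm_num

lemma myHasFDerivAt_norm_rpow {E : Type*} [NormedAddCommGroup E] [InnerProductSpace ℝ E]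
    (q : ℝ) {y : E} (hy : y ≠ 0) :
    HasFDerivAt (fun x : E => ‖x‖ ^ q) ((q * ‖y‖ ^ (q - 2)) • innerSL ℝ y) y := by
  have hny : (0:ℝ) < ‖y‖ := norm_pos_iff.mpr hy
  have ht : (‖y‖ ^ 2 : ℝ) ≠ 0 := by positivity
  have h2 : HasFDerivAt (fun x : E => ‖x‖ ^ 2) ((2:ℕ) • innerSL ℝ y) y := by
    simpa using (hasFDerivAt_id y).norm_sq
  have hr : HasDerivAt (fun t : ℝ => t ^ (q / 2)) ((q / 2) * (‖y‖ ^ 2) ^ (q / 2 - 1)) (‖y‖ ^ 2) :=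
    Real.hasDerivAt_rpow_const (Or.inl ht)
  have hcomp := hr.comp_hasFDerivAt y h2
  have hfun : ((fun t : ℝ => t ^ (q / 2)) ∘ fun x : E => ‖x‖ ^ 2) = fun x : E => ‖x‖ ^ q := by
    funext x
    simp only [Function.comp]
    rw [sq_rpow' _ _ (norm_nonneg x)]
    ring_nf
  rw [hfun] at hcomp
  have heq : (q * ‖y‖ ^ (q - 2)) • innerSL ℝ y
      = (q / 2 * (‖y‖ ^ 2) ^ (q / 2 - 1)) • (2:ℕ) • innerSL ℝ y := by
    ext z
    simp only [ContinuousLinearMap.smul_apply, smul_eq_mul, nsmul_eq_mul, Nat.cast_ofNat,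
      ContinuousLinearMap.coe_smul', Pi.smul_apply]
    rw [sq_rpow' _ _ hny.le, show 2 * (q / 2 - 1) = q - 2 by ring]
    ring
  rw [heq]
  exact hcomp

lemma hessian_entry (d : ℕ) (α : ℝ) {r : EuclideanSpace ℝ (Fin d)} (hr : r ≠ 0) (i j : Fin d) :
    fderiv ℝ (fun y : EuclideanSpace ℝ (Fin d) =>
        fderiv ℝ (fun x : EuclideanSpace ℝ (Fin d) => ‖x‖ ^ α) y (EuclideanSpace.single j 1)) r
      (EuclideanSpace.single i 1)
    = α * ‖r‖ ^ (α - 2) * (if i = j then (1:ℝ) else 0)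
      + α * (α - 2) * ‖r‖ ^ (α - 4) * r i * r j := by
  have hEv : ∀ y : EuclideanSpace ℝ (Fin d), y ≠ 0 →
      fderiv ℝ (fun x : EuclideanSpace ℝ (Fin d) => ‖x‖ ^ α) y (EuclideanSpace.single j 1)
      = (α * ‖y‖ ^ (α - 2)) * y j := by
    intro y hy
    rw [(myHasFDerivAt_norm_rpow α hy).fderiv]
    simp [EuclideanSpace.inner_single_right, real_inner_comm]
  have hop : {y : EuclideanSpace ℝ (Fin d) | y ≠ 0} ∈ nhds r :=
    isOpen_ne.mem_nhds hr
  have hevEq : (fun y : EuclideanSpace ℝ (Fin d) =>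
      fderiv ℝ (fun x : EuclideanSpace ℝ (Fin d) => ‖x‖ ^ α) y (EuclideanSpace.single j 1))
      =ᶠ[nhds r] fun y => (α * ‖y‖ ^ (α - 2)) * y j :=
    Filter.eventuallyEq_of_mem hop fun y hy => hEv y hy
  have hc : HasFDerivAt (fun y : EuclideanSpace ℝ (Fin d) => α * ‖y‖ ^ (α - 2))
      (α • ((α - 2) * ‖r‖ ^ (α - 2 - 2)) • innerSL ℝ r) r :=
    (myHasFDerivAt_norm_rpow (α - 2) hr).const_mul α
  have hd : HasFDerivAt (fun y : EuclideanSpace ℝ (Fin d) => y j)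
      (EuclideanSpace.proj (𝕜 := ℝ) j) r := (EuclideanSpace.proj (𝕜 := ℝ) j).hasFDerivAt
  have hmul : HasFDerivAt (fun y : EuclideanSpace ℝ (Fin d) => α * ‖y‖ ^ (α - 2) * y j) _ r :=
    hc.mul hd
  rw [hevEq.fderiv_eq, hmul.fderiv]
  simp only [ContinuousLinearMap.add_apply, ContinuousLinearMap.smul_apply, smul_eq_mul,
    innerSL_apply_apply, EuclideanSpace.inner_single_right, PiLp.proj_apply,
    EuclideanSpace.single_apply, RCLike.conj_to_real]
  rw [show α - 2 - 2 = α - 4 by ring]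
  rcases eq_or_ne i j with h | h
  · simp only [h, if_pos rfl]; ring
  · rw [if_neg h, if_neg (Ne.symm h)]; ring



/-- With M(r) = D₁[I + (2/(d-1))(I - r̂⊗r̂)]‖r‖² and G(r) = ‖r‖^{2s-d} for
s ∈ (0, d/2), one has M(r) : ∇⊗∇G(r) = -λ G(r) for all r ≠ 0, with λ = 2D₁s(d-2s). -/
theorem riesz_kernel_eigenfunction (d : ℕ) (hd : 2 ≤ d) (D₁ s : ℝ) (hD₁ : 0 < D₁)
    (hs : s ∈ Set.Ioo (0:ℝ) ((d : ℝ) / 2))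
    (M : EuclideanSpace ℝ (Fin d) → Fin d → Fin d → ℝ)
    (hM : ∀ r, r ≠ 0 → ∀ i j, M r i j = D₁ * ((if i = j then (1:ℝ) else 0)
      + (2 / ((d : ℝ) - 1)) * ((if i = j then (1:ℝ) else 0)
          - (‖r‖⁻¹ * r i) * (‖r‖⁻¹ * r j))) * ‖r‖ ^ 2)
    (G : EuclideanSpace ℝ (Fin d) → ℝ) (hG : ∀ x, G x = ‖x‖ ^ (2 * s - (d : ℝ))) :
    ∀ r : EuclideanSpace ℝ (Fin d), r ≠ 0 →
      (∑ i : Fin d, ∑ j : Fin d, M r i j *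
        fderiv ℝ (fun y => fderiv ℝ G y (EuclideanSpace.single j 1)) r
          (EuclideanSpace.single i 1))
        = -(2 * D₁ * s * ((d : ℝ) - 2 * s)) * G r := by
  obtain rfl : G = fun x => ‖x‖ ^ (2 * s - (d : ℝ)) := funext hG
  intro r hr
  set α : ℝ := 2 * s - (d : ℝ) with hα
  have hnr : (0:ℝ) < ‖r‖ := norm_pos_iff.mpr hr
  have hd1 : ((d:ℝ) - 1) ≠ 0 := by
    have : (2:ℝ) ≤ (d:ℝ) := by exact_mod_cast hd
    linarith
  -- abbreviations
  set c : ℝ := 2 / ((d : ℝ) - 1) with hcdef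
  set X : ℝ := α * ‖r‖ ^ (α - 2) with hX
  set Y : ℝ := α * (α - 2) * ‖r‖ ^ (α - 4) with hY
  set P : ℝ := D₁ * (1 + c) * ‖r‖ ^ 2 with hP
  set Q : ℝ := -(D₁ * c) with hQ
  -- Hessian entries
  have hH : ∀ i j : Fin d,
      fderiv ℝ (fun y : EuclideanSpace ℝ (Fin d) =>
        fderiv ℝ (fun x : EuclideanSpace ℝ (Fin d) => ‖x‖ ^ α) y (EuclideanSpace.single j 1)) r
        (EuclideanSpace.single i 1)
      = X * (if i = j then (1:ℝ) else 0) + Y * (r i * r j) := by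
    intro i j
    rw [hessian_entry d α hr i j]; ring
  -- M entries
  have hMr : ∀ i j : Fin d, M r i j = P * (if i = j then (1:ℝ) else 0) + Q * (r i * r j) := by
    intro i j
    rw [hM r hr i j]
    rcases eq_or_ne i j with h | h
    · simp only [h, if_pos rfl]
      field_simp
      ring
    · simp only [if_neg h]
      field_simp
      ring
  -- sum of squares
  have hsq : ∑ i : Fin d, (r i) ^ 2 = ‖r‖ ^ 2 := by
    rw [EuclideanSpace.norm_eq, Real.sq_sqrt (by positivity)]
    simp [sq_abs]
  -- compute the double sum
  have hsum : (∑ i : Fin d, ∑ j : Fin d, M r i j *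
      fderiv ℝ (fun y : EuclideanSpace ℝ (Fin d) =>
        fderiv ℝ (fun x : EuclideanSpace ℝ (Fin d) => ‖x‖ ^ α) y (EuclideanSpace.single j 1)) r
        (EuclideanSpace.single i 1))
      = P * X * d + (P * Y + Q * X + Q * Y * ‖r‖ ^ 2) * ‖r‖ ^ 2 := by
    have hterm : ∀ i j : Fin d, M r i j *
        fderiv ℝ (fun y : EuclideanSpace ℝ (Fin d) =>
          fderiv ℝ (fun x : EuclideanSpace ℝ (Fin d) => ‖x‖ ^ α) y (EuclideanSpace.single j 1)) r
          (EuclideanSpace.single i 1)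
        = (if i = j then P * X + P * Y * (r i * r j) + Q * X * (r i * r j) else 0)
          + Q * Y * ((r i) ^ 2 * (r j) ^ 2) := by
      intro i j
      rw [hMr i j, hH i j]
      split_ifs with h
      · ring
      · ring
    have hinner : ∀ i : Fin d, (∑ j : Fin d, ((if i = j then P * X + P * Y * (r i * r j)
          + Q * X * (r i * r j) else 0) + Q * Y * ((r i) ^ 2 * (r j) ^ 2)))
        = P * X + P * Y * (r i) ^ 2 + Q * X * (r i) ^ 2 + Q * Y * ((r i) ^ 2 * ‖r‖ ^ 2) := by
      intro i
      rw [Finset.sum_add_distrib, Finset.sum_ite_eq Finset.univ i, if_pos (Finset.mem_univ i),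
        ← Finset.mul_sum, ← Finset.mul_sum, hsq]
      ring
    simp only [hterm, hinner]
    rw [Finset.sum_add_distrib, Finset.sum_add_distrib, Finset.sum_add_distrib,
      Finset.sum_const, ← Finset.mul_sum, ← Finset.mul_sum]
    have : ∑ i : Fin d, Q * Y * ((r i) ^ 2 * ‖r‖ ^ 2) = Q * Y * (‖r‖ ^ 2 * ‖r‖ ^ 2) := by
      rw [← Finset.mul_sum, ← Finset.sum_mul, hsq]
    rw [this, hsq, Finset.card_univ, Fintype.card_fin, nsmul_eq_mul]
    ring
  rw [hsum]
  -- final rpow algebra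
  have hB2 : ‖r‖ ^ (α - 2) = ‖r‖ ^ α / ‖r‖ ^ 2 := by
    rw [Real.rpow_sub hnr, ← Real.rpow_natCast ‖r‖ 2]; norm_num
  have hN : ‖r‖ ^ ((2:ℝ)) = ‖r‖ ^ (2:ℕ) := by
    rw [← Real.rpow_natCast ‖r‖ 2]; norm_num
  have hB4 : ‖r‖ ^ (α - 4) = ‖r‖ ^ α / (‖r‖ ^ 2 * ‖r‖ ^ 2) := by
    rw [show α - 4 = α - 2 - 2 by ring, Real.rpow_sub hnr, hB2, hN, div_div]
  have hnr2 : (‖r‖ ^ 2 : ℝ) ≠ 0 := by positivity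
  rw [hX, hY, hP, hQ, hB2, hB4, hα, hcdef]
  field_simp
  ring
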